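/- Let u be a nonnegative C^2 solution of σ̃_2(D^2 u) = 1 on a domain Ω, and let E ⊂ {u ≤ h} ⊂ Ω be an ellipsoid with affine diffeomorphism A(x) = Mx + b from E onto the unit ball, M symmetric positive definite. Then σ̃_2(M^2) ≥ 1/(4h^2). -/

import Mathlib

open Real Finset

/-- partial derivative ∂ᵢ f -/
noncomputable def pdE (n : ℕ) (f : EuclideanSpace ℝ (Fin n) → ℝ) (i : Fin n)
    (x : EuclideanSpace ℝ (Fin n)) : ℝ :=
  fderiv ℝ f x (EuclideanSpace.single i 1)

/-- Hessian matrix of f at x -/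
noncomputable def HessE (n : ℕ) (f : EuclideanSpace ℝ (Fin n) → ℝ)
    (x : EuclideanSpace ℝ (Fin n)) : Matrix (Fin n) (Fin n) ℝ :=
  fun i j => pdE n (pdE n f j) i x

/-- Donaldson's operator σ̃₂(S) = s₁₁(s₂₂+⋯+sₙₙ) − s₁₂² − ⋯ − s₁ₙ² -/
noncomputable def sig2 (n : ℕ) [NeZero n] (S : Matrix (Fin n) (Fin n) ℝ) : ℝ :=
  S 0 0 * (∑ j ∈ Finset.univ.filter (fun j => j ≠ 0), S j j) -
    ∑ j ∈ Finset.univ.filter (fun j => j ≠ 0), (S 0 j) ^ 2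

/-!
Put `v(x) = h |A x|²`, so that `D²v = 2h M²`, `v = 0` at the centre `x₀ = A⁻¹ 0` and `v = h` on
`∂E`. Since `0 ≤ u ≤ h` on `E`, for `s = ±1` the function `s u - v` is at least as large at `x₀`
as anywhere on `∂E`, hence attains its maximum over `E` at an interior point `p`, where
`s D²u(p) ≤ 2h M²`. As `σ̃₂(D²u) = 1`, the entry `∂₁₁u` never vanishes on the connected set `E`,
so one choice of sign gives `s ∂₁₁u(p) > 0`. On the cone `{S₁₁ > 0, σ̃₂(S) ≥ 0}` the operator
`σ̃₂` is monotone for the Loewner order, and it is even and homogeneous of degree 2, so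
`1 = σ̃₂(s D²u(p)) ≤ σ̃₂(2h M²) = 4h² σ̃₂(M²)`.
-/

open Filter Topology Metric
open scoped Matrix RealInnerProductSpace

namespace Matrix

lemma PosSemidef.sq_apply_le_mul_diag {ι : Type*} [Fintype ι] {P : Matrix ι ι ℝ}
    (hP : P.PosSemidef) (i j : ι) : P i j ^ 2 ≤ P i i * P j j := by
  have hdet := (hP.submatrix ![i, j]).det_nonneg
  have hsymm : P j i = P i j := hP.1.apply i j
  rw [det_fin_two] at hdet
  simp only [submatrix_apply, cons_val_zero, cons_val_one] at hdet
  rw [hsymm, ← sq] at hdet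
  linarith

end Matrix

section Sig2

variable {n : ℕ} [NeZero n]

lemma sig2_smul (c : ℝ) (S : Matrix (Fin n) (Fin n) ℝ) : sig2 n (c • S) = c ^ 2 * sig2 n S := by
  simp only [sig2, Matrix.smul_apply, smul_eq_mul, ← Finset.mul_sum, mul_pow]
  ring

lemma apply_zero_zero_ne_zero_of_sig2_pos {S : Matrix (Fin n) (Fin n) ℝ} (hS : 0 < sig2 n S) :
    S 0 0 ≠ 0 := by
  intro h0
  rw [sig2, h0, zero_mul, zero_sub, neg_pos] at hS
  exact hS.not_ge (Finset.sum_nonneg fun j _ => sq_nonneg _)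

theorem sig2_le_sig2_of_posSemidef_sub {S T : Matrix (Fin n) (Fin n) ℝ} (ha : 0 < S 0 0)
    (hS : 0 ≤ sig2 n S) (hST : (T - S).PosSemidef) : sig2 n S ≤ sig2 n T := by
  set P := T - S
  have hT : T = S + P := by simp [P]
  set J := Finset.univ.filter (fun j : Fin n => j ≠ 0)
  have hsig : sig2 n T - sig2 n S = (S 0 0 * ∑ j ∈ J, P j j + P 0 0 * ∑ j ∈ J, S j j
      - 2 * ∑ j ∈ J, S 0 j * P 0 j) + (P 0 0 * ∑ j ∈ J, P j j - ∑ j ∈ J, P 0 j ^ 2) := by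
    simp only [sig2, hT, Matrix.add_apply, add_sq, Finset.sum_add_distrib, mul_assoc,
      ← Finset.mul_sum]
    ring
  set τ := ∑ j ∈ J, S j j
  set ρ := ∑ j ∈ J, P j j
  set C := ∑ j ∈ J, S 0 j ^ 2
  set D := ∑ j ∈ J, P 0 j ^ 2
  set X := ∑ j ∈ J, S 0 j * P 0 j
  have hr : 0 ≤ P 0 0 := hST.diag_nonneg
  have hρ : 0 ≤ ρ := Finset.sum_nonneg fun j _ => hST.diag_nonneg
  have hC : 0 ≤ C := Finset.sum_nonneg fun j _ => sq_nonneg _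
  have hD : 0 ≤ D := Finset.sum_nonneg fun j _ => sq_nonneg _
  have hCτ : C ≤ S 0 0 * τ := by simpa [sig2] using hS
  have hDρ : D ≤ P 0 0 * ρ := by
    rw [Finset.mul_sum]; exact Finset.sum_le_sum fun j _ => hST.sq_apply_le_mul_diag 0 j
  have hX : X ^ 2 ≤ C * D := Finset.sum_mul_sq_le_sq_mul_sq J _ _
  have hτ : 0 ≤ τ := nonneg_of_mul_nonneg_right (hC.trans hCτ) ha
  -- `4 X² ≤ 4 C D ≤ 4 (S₀₀ τ) (P₀₀ ρ) ≤ (S₀₀ ρ + P₀₀ τ)²` by Cauchy–Schwarz and AM-GM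
  have h2X : 2 * X ≤ S 0 0 * ρ + P 0 0 * τ := by
    refine le_of_abs_le (abs_le_of_sq_le_sq ?_ (by positivity))
    nlinarith [sq_nonneg (S 0 0 * ρ - P 0 0 * τ), mul_le_mul hCτ hDρ hD (hC.trans hCτ)]
  linarith

end Sig2

theorem IsLocalMax.deriv_deriv_nonpos {g : ℝ → ℝ} {a : ℝ} (h : IsLocalMax g a)
    (hc : ContinuousAt g a) : deriv (deriv g) a ≤ 0 := by
  by_contra! hpos
  -- the second-derivative test makes `a` a local minimum as well, so `g` is locally constant
  have hmin := isLocalMin_of_deriv_deriv_pos hpos h.deriv_eq_zero hc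
  have hconst : g =ᶠ[𝓝 a] fun _ => g a := (h.and hmin).mono fun x hx => le_antisymm hx.1 hx.2
  have hderiv : deriv g =ᶠ[𝓝 a] fun _ => 0 :=
    hconst.eventually_nhds.mono fun x hx => by rw [Filter.EventuallyEq.deriv_eq hx, deriv_const]
  rw [hderiv.deriv_eq, deriv_const] at hpos
  exact hpos.false

theorem IsLocalMax.fderiv_fderiv_apply_self_nonpos {E : Type*} [NormedAddCommGroup E]
    [NormedSpace ℝ E] {f : E → ℝ} {a : E} (h : IsLocalMax f a) (hf : ContDiffAt ℝ 2 f a)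
    (w : E) : fderiv ℝ (fderiv ℝ f) a w w ≤ 0 := by
  set line : ℝ → E := fun t => a + t • w
  have hline : ∀ t, HasDerivAt line w t := fun t => by
    simpa only [one_smul] using ((hasDerivAt_id' t).smul_const w).const_add a
  have hline0 : Tendsto line (𝓝 0) (𝓝 a) := by simpa [line] using (hline 0).continuousAt.tendsto
  have hderiv : deriv (f ∘ line) =ᶠ[𝓝 0] fun t => fderiv ℝ f (line t) w := by
    have hdiff : ∀ᶠ y in 𝓝 a, DifferentiableAt ℝ f y :=
      (hf.eventually (by simp)).mono fun y hy => hy.differentiableAt two_ne_zero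
    filter_upwards [hline0.eventually hdiff] with t ht
    exact (ht.hasFDerivAt.comp_hasDerivAt t (hline t)).deriv
  have hsecond : HasDerivAt (fun t => fderiv ℝ f (line t) w) (fderiv ℝ (fderiv ℝ f) a w w) 0 := by
    have hD : HasFDerivAt (fderiv ℝ f) (fderiv ℝ (fderiv ℝ f) a) (line 0) := by
      simpa [line] using ((hf.fderiv_right le_rfl).differentiableAt one_ne_zero).hasFDerivAt
    exact (ContinuousLinearMap.apply ℝ ℝ w).hasFDerivAt.comp_hasDerivAt 0
      (hD.comp_hasDerivAt 0 (hline 0))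
  have hline_zero : line 0 = a := by simp [line]
  have hmax : IsLocalMax (f ∘ line) 0 := (hline_zero ▸ h).comp_continuous (hline 0).continuousAt
  rw [← hsecond.deriv, ← hderiv.deriv_eq]
  exact hmax.deriv_deriv_nonpos (hf.continuousAt.comp_of_eq (hline 0).continuousAt hline_zero)

section Hessian

variable {n : ℕ} {f g : EuclideanSpace ℝ (Fin n) → ℝ} {x : EuclideanSpace ℝ (Fin n)}

lemma contDiff_pdE {m : WithTop ℕ∞} (hf : ContDiff ℝ (m + 1) f) (i : Fin n) :
    ContDiff ℝ m (pdE n f i) :=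
  (hf.fderiv_right le_rfl).clm_apply contDiff_const

lemma pdE_sub_apply (hf : DifferentiableAt ℝ f x) (hg : DifferentiableAt ℝ g x) (i : Fin n) :
    pdE n (f - g) i x = pdE n f i x - pdE n g i x := by
  simp [pdE, fderiv_sub hf hg]

lemma pdE_const_smul (c : ℝ) (i : Fin n) : pdE n (c • f) i = c • pdE n f i := by
  ext y
  simp [pdE, fderiv_const_smul_field]

lemma HessE_sub (hf : ContDiff ℝ 2 f) (hg : ContDiff ℝ 2 g) :
    HessE n (f - g) x = HessE n f x - HessE n g x := by
  ext i j
  have hpd : pdE n (f - g) j = pdE n f j - pdE n g j := funext fun y =>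
    pdE_sub_apply (hf.differentiable two_ne_zero y) (hg.differentiable two_ne_zero y) j
  simp only [HessE, Matrix.sub_apply, hpd]
  exact pdE_sub_apply ((contDiff_pdE hf j).differentiable one_ne_zero x)
    ((contDiff_pdE hg j).differentiable one_ne_zero x) i

lemma HessE_const_smul (c : ℝ) :
    HessE n (c • f) x = c • HessE n f x := by
  ext i j
  simp [HessE, pdE_const_smul]

lemma HessE_apply (hf : ContDiffAt ℝ 2 f x) (i j : Fin n) :
    HessE n f x i j =
      fderiv ℝ (fderiv ℝ f) x (EuclideanSpace.single i 1) (EuclideanSpace.single j 1) := by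
  have hD : HasFDerivAt (fderiv ℝ f) (fderiv ℝ (fderiv ℝ f) x) x :=
    ((hf.fderiv_right le_rfl).differentiableAt one_ne_zero).hasFDerivAt
  have hpd : pdE n f j = ContinuousLinearMap.apply ℝ ℝ (EuclideanSpace.single j 1) ∘ fderiv ℝ f :=
    rfl
  rw [HessE, pdE, hpd,
    ((ContinuousLinearMap.apply ℝ ℝ (EuclideanSpace.single j 1)).hasFDerivAt.comp x hD).fderiv]
  rfl

lemma isSymm_HessE (hf : ContDiffAt ℝ 2 f x) : (HessE n f x).IsSymm := by
  ext i j
  rw [Matrix.transpose_apply, HessE_apply hf, HessE_apply hf]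
  exact (hf.isSymmSndFDerivAt (by simp [minSmoothness_of_isRCLikeNormedField])).eq _ _

lemma dotProduct_HessE_mulVec (hf : ContDiffAt ℝ 2 f x) (w : Fin n → ℝ) :
    w ⬝ᵥ (HessE n f x *ᵥ w) = fderiv ℝ (fderiv ℝ f) x (WithLp.toLp 2 w) (WithLp.toLp 2 w) := by
  have hw : WithLp.toLp 2 w = ∑ i, w i • EuclideanSpace.single i (1 : ℝ) := by
    simpa [EuclideanSpace.basisFun_apply] using
      ((EuclideanSpace.basisFun (Fin n) ℝ).sum_repr (WithLp.toLp 2 w)).symm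
  simp only [hw, map_sum, map_smul, FunLike.coe_sum, Finset.sum_apply, FunLike.coe_smul,
    Pi.smul_apply, smul_eq_mul, ← HessE_apply hf, dotProduct, Matrix.mulVec, Finset.mul_sum]
  rw [Finset.sum_comm]
  exact Finset.sum_congr rfl fun _ _ => Finset.sum_congr rfl fun _ _ => by ring

theorem IsLocalMax.posSemidef_neg_HessE (h : IsLocalMax f x) (hf : ContDiffAt ℝ 2 f x) :
    (-HessE n f x).PosSemidef := by
  refine Matrix.PosSemidef.of_dotProduct_mulVec_nonneg ?_ fun w => ?_
  · exact (isSymm_HessE hf).neg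
  · simp only [star_trivial, Matrix.neg_mulVec, dotProduct_neg, dotProduct_HessE_mulVec hf]
    exact neg_nonneg.2 (h.fderiv_fderiv_apply_self_nonpos hf _)

lemma HessE_norm_sq_toEuclideanCLM_add (M : Matrix (Fin n) (Fin n) ℝ)
    (b x : EuclideanSpace ℝ (Fin n)) :
    HessE n (fun y => ‖Matrix.toEuclideanCLM (𝕜 := ℝ) M y + b‖ ^ 2) x = (2 : ℝ) • (Mᵀ * M) := by
  set L := Matrix.toEuclideanCLM (𝕜 := ℝ) M
  have hA : ∀ y, HasFDerivAt (fun y => L y + b) L y := fun y => L.hasFDerivAt.add_const b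
  have hpd : ∀ j, pdE n (fun y => ‖L y + b‖ ^ 2) j =
      fun y => 2 * ⟪L y + b, L (EuclideanSpace.single j 1)⟫ := fun j => by
    ext y
    rw [pdE, (hA y).norm_sq.fderiv]
    simp [inner_add_left, mul_add]
  ext i j
  have hlin : HasFDerivAt (fun y => 2 * ⟪L y + b, L (EuclideanSpace.single j 1)⟫)
      ((2 : ℝ) • (fderivInnerCLM ℝ (L x + b, L (EuclideanSpace.single j 1))).comp (L.prod 0)) x :=
    ((hA x).inner ℝ (hasFDerivAt_const _ x)).const_mul 2
  rw [HessE, hpd j, pdE, hlin.fderiv]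
  simp [fderivInnerCLM_apply]
  rw [Matrix.inner_toEuclideanCLM]
  simp [Matrix.mul_apply, dotProduct, L]

end Hessian

theorem IsCompact.exists_isLocalMax_mem_of_forall_le {X α : Type*} [TopologicalSpace X]
    [LinearOrder α] [TopologicalSpace α] [ClosedIciTopology α] {K U : Set X} {f : X → α}
    (hK : IsCompact K) (hU : IsOpen U) (hUK : U ⊆ K) (hf : ContinuousOn f K) {x₀ : X}
    (hx₀ : x₀ ∈ U) (hle : ∀ y ∈ K \ U, f y ≤ f x₀) : ∃ p ∈ U, IsLocalMax f p := by
  have hloc : ∀ p ∈ U, IsMaxOn f K p → IsLocalMax f p := fun p hp hmax =>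
    hmax.isLocalMax (mem_of_superset (hU.mem_nhds hp) hUK)
  obtain ⟨p, hpK, hpmax⟩ := hK.exists_isMaxOn ⟨x₀, hUK hx₀⟩ hf
  by_cases hpU : p ∈ U
  · exact ⟨p, hpU, hloc p hpU hpmax⟩
  · exact ⟨x₀, hx₀, hloc x₀ hx₀ fun y hy => (hpmax hy).trans (hle p ⟨hpK, hpU⟩)⟩

theorem IsPreconnected.mul_pos_of_ne_zero {X : Type*} [TopologicalSpace X] {U : Set X}
    (hU : IsPreconnected U) {g : X → ℝ} (hg : ContinuousOn g U) (hne : ∀ x ∈ U, g x ≠ 0)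
    {p q : X} (hp : p ∈ U) (hq : q ∈ U) : 0 < g p * g q := by
  have hsame : ∀ a ∈ U, ∀ b ∈ U, g a < 0 → g b < 0 := fun a ha b hb hga => by
    by_contra! hgb
    obtain ⟨z, hzU, hz⟩ := hU.intermediate_value₂ ha hb hg continuousOn_const hga.le hgb
    exact hne z hzU hz
  rcases (hne p hp).lt_or_gt with hgp | hgp
  · exact mul_pos_of_neg_of_neg hgp (hsame p hp q hq hgp)
  · refine mul_pos hgp (lt_of_not_ge fun hgq => ?_)
    exact (hsame q hq p hp ((hne q hq).lt_of_le hgq)).not_gt hgp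

theorem exists_isLocalMax_smul_sub_mul_norm_sq {X Y : Type*} [TopologicalSpace X]
    [NormedAddCommGroup Y] [ProperSpace Y] (A : X ≃ₜ Y) {u : X → ℝ} {h s : ℝ}
    (hu : ContinuousOn u (A ⁻¹' closedBall 0 1))
    (hbound : ∀ x, ‖A x‖ ≤ 1 → 0 ≤ u x ∧ u x ≤ h) (hs : |s| ≤ 1) :
    ∃ p, ‖A p‖ < 1 ∧ IsLocalMax (fun x => s * u x - h * ‖A x‖ ^ 2) p := by
  have hx₀ : ‖A (A.symm 0)‖ < 1 := by simp
  have hle : ∀ y ∈ A ⁻¹' closedBall 0 1 \ A ⁻¹' ball 0 1,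
      s * u y - h * ‖A y‖ ^ 2 ≤ s * u (A.symm 0) - h * ‖A (A.symm 0)‖ ^ 2 := by
    rintro y ⟨hy, hy'⟩
    simp only [Set.mem_preimage, mem_closedBall_zero_iff, mem_ball_zero_iff, not_lt] at hy hy'
    have hy1 : ‖A y‖ = 1 := le_antisymm hy hy'
    obtain ⟨hu0, huh⟩ := hbound y hy
    obtain ⟨hu0', huh'⟩ := hbound _ hx₀.le
    have : s * (u y - u (A.symm 0)) ≤ h := by
      calc s * (u y - u (A.symm 0)) ≤ |s| * |u y - u (A.symm 0)| := by
            rw [← abs_mul]; exact le_abs_self _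
        _ ≤ 1 * h := by
            gcongr
            exact abs_sub_le_iff.2 ⟨by linarith, by linarith⟩
        _ = h := one_mul h
    simp only [hy1, A.apply_symm_apply, norm_zero]
    linarith
  have hcont : Continuous fun x => ‖A x‖ ^ 2 := A.continuous.norm.pow 2
  obtain ⟨p, hp, hmax⟩ :=
    (A.isCompact_preimage.2 (isCompact_closedBall 0 1)).exists_isLocalMax_mem_of_forall_le
    (isOpen_ball.preimage A.continuous) (Set.preimage_mono ball_subset_closedBall)
    ((continuousOn_const.mul hu).sub (continuousOn_const.mul hcont.continuousOn))
    (by simp) hle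
  exact ⟨p, by simpa using hp, hmax⟩

/-- The map `A x = M x + b`, so that the ellipsoid is `E = A⁻¹(closedBall 0 1)`. -/
noncomputable def Matrix.affineHomeomorph {n : ℕ} {M : Matrix (Fin n) (Fin n) ℝ} (hM : IsUnit M)
    (b : EuclideanSpace ℝ (Fin n)) : EuclideanSpace ℝ (Fin n) ≃ₜ EuclideanSpace ℝ (Fin n) :=
  (ContinuousLinearEquiv.ofUnit (hM.map (Matrix.toEuclideanCLM (𝕜 := ℝ))).unit).toHomeomorph.trans
    (Homeomorph.addRight b)

section Ellipsoid

variable {n : ℕ} {M : Matrix (Fin n) (Fin n) ℝ} (hM : IsUnit M) (b : EuclideanSpace ℝ (Fin n))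

lemma Matrix.affineHomeomorph_apply (x : EuclideanSpace ℝ (Fin n)) :
    Matrix.affineHomeomorph hM b x = Matrix.toEuclideanCLM (𝕜 := ℝ) M x + b :=
  rfl

lemma Matrix.norm_affineHomeomorph_sq (x : EuclideanSpace ℝ (Fin n)) :
    ‖Matrix.affineHomeomorph hM b x‖ ^ 2 = ∑ i, (M.mulVec x.ofLp i + b i) ^ 2 := by
  simp [Matrix.affineHomeomorph_apply, EuclideanSpace.real_norm_sq_eq]

theorem exists_posSemidef_sub_smul_HessE {u : EuclideanSpace ℝ (Fin n) → ℝ}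
    (hu : ContDiff ℝ 2 u) (hMs : M.IsSymm) {h s : ℝ}
    (hbound : ∀ x, ‖Matrix.affineHomeomorph hM b x‖ ≤ 1 → 0 ≤ u x ∧ u x ≤ h) (hs : |s| ≤ 1) :
    ∃ p, ‖Matrix.affineHomeomorph hM b p‖ < 1 ∧
      ((2 * h) • (M * M) - s • HessE n u p).PosSemidef := by
  obtain ⟨p, hp, hmax⟩ := exists_isLocalMax_smul_sub_mul_norm_sq (Matrix.affineHomeomorph hM b)
    hu.continuous.continuousOn hbound hs
  set q : EuclideanSpace ℝ (Fin n) → ℝ := fun y => ‖Matrix.toEuclideanCLM (𝕜 := ℝ) M y + b‖ ^ 2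
  have hsu : ContDiff ℝ 2 (s • u) := hu.const_smul s
  have hhq : ContDiff ℝ 2 (h • q) :=
    ((((Matrix.toEuclideanCLM (𝕜 := ℝ) M).contDiff.add contDiff_const).norm_sq ℝ).const_smul h :)
  have hneg := (show IsLocalMax (s • u - h • q) p from hmax).posSemidef_neg_HessE
    (hsu.sub hhq).contDiffAt
  rw [HessE_sub hsu hhq, HessE_const_smul, HessE_const_smul, HessE_norm_sq_toEuclideanCLM_add,
    hMs.eq] at hneg
  refine ⟨p, hp, ?_⟩
  convert hneg using 1
  module

theorem one_le_sig2_smul_mul_self {u : EuclideanSpace ℝ (Fin n) → ℝ} [NeZero n]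
    (hu : ContDiff ℝ 2 u) (hMs : M.IsSymm) {h : ℝ}
    (hsol : ∀ x, ‖Matrix.affineHomeomorph hM b x‖ < 1 → sig2 n (HessE n u x) = 1)
    (hbound : ∀ x, ‖Matrix.affineHomeomorph hM b x‖ ≤ 1 → 0 ≤ u x ∧ u x ≤ h) :
    1 ≤ sig2 n ((2 * h) • (M * M)) := by
  set U := Matrix.affineHomeomorph hM b ⁻¹' ball 0 1
  have hsolU : ∀ x ∈ U, sig2 n (HessE n u x) = 1 := fun x hx => hsol x (mem_ball_zero_iff.1 hx)
  have hne : ∀ x ∈ U, HessE n u x 0 0 ≠ 0 := fun x hx =>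
    apply_zero_zero_ne_zero_of_sig2_pos ((hsolU x hx).symm ▸ one_pos)
  obtain ⟨p₁, hp₁, hP₁⟩ := exists_posSemidef_sub_smul_HessE hM b hu hMs hbound (s := 1) (by simp)
  obtain ⟨p₂, hp₂, hP₂⟩ := exists_posSemidef_sub_smul_HessE hM b hu hMs hbound (s := -1) (by simp)
  replace hp₁ : p₁ ∈ U := mem_ball_zero_iff.2 hp₁
  replace hp₂ : p₂ ∈ U := mem_ball_zero_iff.2 hp₂
  have hsign : 0 < HessE n u p₁ 0 0 * HessE n u p₂ 0 0 :=
    ((Matrix.affineHomeomorph hM b).isPreconnected_preimage.2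
      (convex_ball 0 1).isPreconnected).mul_pos_of_ne_zero
      (contDiff_pdE (m := 0) (contDiff_pdE hu 0) 0).continuous.continuousOn hne hp₁ hp₂
  -- `σ̃₂` is even, so whichever of `±D²u` has a positive `(0, 0)` entry can be compared
  obtain ⟨s, p, hp, hs, hsp, hP⟩ : ∃ s : ℝ, ∃ p ∈ U, s ^ 2 = 1 ∧ 0 < s * HessE n u p 0 0 ∧
      ((2 * h) • (M * M) - s • HessE n u p).PosSemidef := by
    rcases (hne p₁ hp₁).lt_or_gt with hneg | hpos
    · exact ⟨-1, p₂, hp₂, by norm_num, by nlinarith, hP₂⟩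
    · exact ⟨1, p₁, hp₁, by norm_num, by simpa using hpos, hP₁⟩
  have hsig : sig2 n (s • HessE n u p) = 1 := by rw [sig2_smul, hs, hsolU p hp, one_mul]
  exact hsig ▸ sig2_le_sig2_of_posSemidef_sub (by simpa using hsp) (hsig ▸ zero_le_one) hP

end Ellipsoid

theorem ellipsoid_lower_bound_general (n : ℕ) [NeZero n]
    (Ω : Set (EuclideanSpace ℝ (Fin n)))
    (u : EuclideanSpace ℝ (Fin n) → ℝ) (hu : ContDiff ℝ 2 u)
    (hpos : ∀ x ∈ Ω, 0 ≤ u x)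
    (hsol : ∀ x ∈ Ω, sig2 n (HessE n u x) = 1)
    (h : ℝ) (hh : 0 < h)
    (M : Matrix (Fin n) (Fin n) ℝ) (hM : M.IsSymm) (hMpd : M.PosDef)
    (b : EuclideanSpace ℝ (Fin n))
    (hE : {x : EuclideanSpace ℝ (Fin n) | ∑ i, (M.mulVec x.ofLp i + b i)^2 ≤ 1} ⊆ {x ∈ Ω | u x ≤ h}) :
    sig2 n (M * M) ≥ 1 / (4 * h^2) := by
  have hEA : ∀ x, ‖Matrix.affineHomeomorph hMpd.isUnit b x‖ ≤ 1 → x ∈ Ω ∧ u x ≤ h :=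
    fun x hx => hE <| by
      rw [Set.mem_ofPred_eq, ← Matrix.norm_affineHomeomorph_sq hMpd.isUnit]
      exact pow_le_one₀ (norm_nonneg _) hx
  have h1 := one_le_sig2_smul_mul_self hMpd.isUnit b hu hM
    (fun x hx => hsol x (hEA x hx.le).1) (fun x hx => ⟨hpos x (hEA x hx).1, (hEA x hx).2⟩)
  rw [sig2_smul] at h1
  rw [ge_iff_le, div_le_iff₀ (by positivity)]
  linarith

/-- If u ≥ 0 solves σ̃₂(D²u) = 1 and the ellipsoid E = {|Mx+b| ≤ 1} is contained
    in the sublevel set {u ≤ h}, then σ̃₂(M²) ≥ 1/(4h²). -/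
theorem ellipsoid_lower_bound (n : ℕ) [NeZero n]
    (Ω : Set (EuclideanSpace ℝ (Fin n))) (hΩ : IsOpen Ω)
    (u : EuclideanSpace ℝ (Fin n) → ℝ) (hu : ContDiff ℝ 2 u)
    (hpos : ∀ x ∈ Ω, 0 ≤ u x)
    (hsol : ∀ x ∈ Ω, sig2 n (HessE n u x) = 1)
    (h : ℝ) (hh : 0 < h)
    (M : Matrix (Fin n) (Fin n) ℝ) (hM : M.IsSymm) (hMpd : M.PosDef)
    (b : EuclideanSpace ℝ (Fin n))
    (hE : {x : EuclideanSpace ℝ (Fin n) | ∑ i, (M.mulVec x.ofLp i + b i)^2 ≤ 1} ⊆ {x ∈ Ω | u x ≤ h}) :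
    sig2 n (M * M) ≥ 1 / (4 * h^2) :=
  ellipsoid_lower_bound_general n Ω u hu hpos hsol h hh M hM hMpd b hE
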